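/- arXiv:2402.04721 — 3 statements merged into one kernel-verified Lean document; each statement's English description precedes it below -/
import Mathlib

section
/- Let X, Z ∈ ℝ^{n×n} and suppose every complex eigenvalue of the n²×n² matrix Iₙ ⊗ Xᵀ + Xᵀ ⊗ Iₙ + Zᵀ ⊗ Zᵀ has negative real part. Then for every symmetric W ∈ ℝ^{n×n} there exists a unique symmetric Y ∈ ℝ^{n×n} with XᵀY + YX + ZᵀYZ = W; that is, the generalized Lyapunov operator 𝓛_{X,Z}(Y) = XᵀY + YX + ZᵀYZ is a bijection on the space of symmetric n×n real matrices. -/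
open Matrix
open scoped Kronecker

noncomputable section

/-- Vectorization identity: `(A ⊗ₖ B) · vec Y = vec (A Y Bᵀ)`. -/
lemma kron_mulVec_aux {n : ℕ} (A B Y : Matrix (Fin n) (Fin n) ℝ) :
    (A ⊗ₖ B) *ᵥ (fun p : Fin n × Fin n => Y p.1 p.2)
      = fun p : Fin n × Fin n => (A * Y * Bᵀ) p.1 p.2 := by
  funext p
  obtain ⟨i, j⟩ := p
  simp only [Matrix.mulVec, dotProduct, Fintype.sum_prod_type,
    Matrix.kroneckerMap_apply, Matrix.mul_apply, Matrix.transpose_apply,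
    Finset.sum_mul, Finset.mul_sum]
  rw [Finset.sum_comm]
  apply Finset.sum_congr rfl
  intro k _
  apply Finset.sum_congr rfl
  intro l _
  ring

/-- The generalized Lyapunov operator as a linear map. -/
def lyapLM {n : ℕ} (X Z : Matrix (Fin n) (Fin n) ℝ) :
    Matrix (Fin n) (Fin n) ℝ →ₗ[ℝ] Matrix (Fin n) (Fin n) ℝ where
  toFun Y := Xᵀ * Y + Y * X + Zᵀ * Y * Z
  map_add' a b := by
    simp only [Matrix.mul_add, Matrix.add_mul]
    abel
  map_smul' c a := by
    simp only [Matrix.mul_smul, Matrix.smul_mul, RingHom.id_apply, smul_add]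

/-- Every complex eigenvalue of `Iₙ ⊗ Xᵀ + Xᵀ ⊗ Iₙ + Zᵀ ⊗ Zᵀ` has negative real part. -/
def HurwitzKron {n : ℕ} (X Z : Matrix (Fin n) (Fin n) ℝ) : Prop :=
  ∀ μ ∈ spectrum ℂ
      (((1 : Matrix (Fin n) (Fin n) ℝ) ⊗ₖ Xᵀ + Xᵀ ⊗ₖ (1 : Matrix (Fin n) (Fin n) ℝ)
          + Zᵀ ⊗ₖ Zᵀ).map (Complex.ofReal ·)),
    μ.re < 0

/-- If every complex eigenvalue of `Iₙ ⊗ Xᵀ + Xᵀ ⊗ Iₙ + Zᵀ ⊗ Zᵀ` has negative real part, then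
the generalized Lyapunov operator `𝓛_{X,Z}(Y) = XᵀY + YX + ZᵀYZ` is a bijection on the space of
symmetric `n×n` real matrices: for every symmetric `W` there is a unique symmetric `Y` with
`XᵀY + YX + ZᵀYZ = W`. -/
theorem lyapOp_bijective_of_hurwitz (n : ℕ) (hn : 0 < n)
    (X Z : Matrix (Fin n) (Fin n) ℝ) (hXZ : HurwitzKron X Z) :
    ∀ W : Matrix (Fin n) (Fin n) ℝ, W.IsSymm →
      ∃! Y : Matrix (Fin n) (Fin n) ℝ, Y.IsSymm ∧ Xᵀ * Y + Y * X + Zᵀ * Y * Z = W := by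
  intro W hW
  set K : Matrix (Fin n × Fin n) (Fin n × Fin n) ℝ :=
    (1 : Matrix (Fin n) (Fin n) ℝ) ⊗ₖ Xᵀ + Xᵀ ⊗ₖ (1 : Matrix (Fin n) (Fin n) ℝ)
      + Zᵀ ⊗ₖ Zᵀ with hK
  -- `K` is invertible since `0` is not in the spectrum of its complexification
  have hKC : IsUnit (K.map (Complex.ofReal ·)) := by
    by_contra h
    have h0 := hXZ 0 ((spectrum.zero_mem_iff ℂ).mpr h)
    simp at h0
  have hdetK : IsUnit K.det := by
    have hdC : IsUnit (K.map (Complex.ofReal ·)).det :=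
      (Matrix.isUnit_iff_isUnit_det _).mp hKC
    have heq : (K.map (Complex.ofReal ·)).det = ((K.det : ℝ) : ℂ) :=
      (Complex.ofRealHom.map_det K).symm
    rw [heq] at hdC
    have hne : ((K.det : ℝ) : ℂ) ≠ 0 := hdC.ne_zero
    exact isUnit_iff_ne_zero.mpr (by exact_mod_cast hne)
  have hKu : IsUnit K := (Matrix.isUnit_iff_isUnit_det _).mpr hdetK
  have hmv : Function.Injective (K.mulVec) := Matrix.mulVec_injective_iff_isUnit.mpr hKu
  -- vectorization identity for the Lyapunov operator
  have hvec : ∀ Y : Matrix (Fin n) (Fin n) ℝ,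
      K *ᵥ (fun p : Fin n × Fin n => Y p.1 p.2)
        = fun p : Fin n × Fin n => (lyapLM X Z Y) p.1 p.2 := by
    intro Y
    rw [hK, Matrix.add_mulVec, Matrix.add_mulVec, kron_mulVec_aux, kron_mulVec_aux,
      kron_mulVec_aux]
    funext p
    simp only [Pi.add_apply, lyapLM, LinearMap.coe_mk, AddHom.coe_mk]
    rw [Matrix.one_mul, Matrix.transpose_transpose, Matrix.transpose_one, Matrix.mul_one]
    ring_nf
    simp [Matrix.add_apply]
    ring
  -- injectivity of the Lyapunov operator
  have hinj : Function.Injective (lyapLM X Z) := by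
    intro Y₁ Y₂ h
    have : K *ᵥ (fun p : Fin n × Fin n => Y₁ p.1 p.2)
        = K *ᵥ (fun p : Fin n × Fin n => Y₂ p.1 p.2) := by
      rw [hvec, hvec, h]
    have h2 := hmv this
    ext i j
    exact congrFun h2 (i, j)
  -- surjectivity in finite dimension
  have hsurj : Function.Surjective (lyapLM X Z) :=
    (LinearMap.injective_iff_surjective).mp hinj
  obtain ⟨Y, hY⟩ := hsurj W
  -- the solution is symmetric
  have hLtrans : ∀ A : Matrix (Fin n) (Fin n) ℝ, lyapLM X Z Aᵀ = (lyapLM X Z A)ᵀ := by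
    intro A
    simp only [lyapLM, LinearMap.coe_mk, AddHom.coe_mk, Matrix.transpose_add,
      Matrix.transpose_mul, Matrix.transpose_transpose, Matrix.mul_assoc]
    abel
  have hYT : lyapLM X Z Yᵀ = W := by
    rw [hLtrans, hY, ← Matrix.IsSymm] at *
    exact hW
  have hYsymm : Y.IsSymm := hinj (hYT.trans hY.symm)
  refine ⟨Y, ⟨hYsymm, hY⟩, ?_⟩
  rintro Y' ⟨_, hY'⟩
  exact hinj (show lyapLM X Z Y' = lyapLM X Z Y from hY'.trans hY.symm)

end
end

section
/- Fix Lv ∈ ℝ^{m2×n}; set A_k = A + B2 Lv and Q_k = Q − γ² LvᵀLv; for symmetric P with S(P) invertible set A(P) = A_k + B1 K(P) and C(P) = C + D K(P). Suppose P* and P are symmetric n×n matrices with S(P*) and S(P) invertible, P* solves the inner GARE at Lv, i.e. A_kᵀP* + P* A_k + CᵀP*C + Q_k − N(P*)ᵀS(P*)⁻¹N(P*) = 0, and P' is a symmetric matrix solving 𝓛_{A(P),C(P)}(P') = −Q_k − N(P)ᵀS(P)⁻¹ R S(P)⁻¹ N(P). Then, writing Δ = P − P*, one has 𝓛_{A(P),C(P)}(P'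 − P*) = −𝒴(Δ), where 𝒴(Δ) = N(Δ)ᵀS(P)⁻¹N(Δ) + N(P*)ᵀS(P*)⁻¹(DᵀΔD)S(P)⁻¹N(P*) − N(P)ᵀS(P*)⁻¹(DᵀΔD)S(P)⁻¹N(P) + N(P)ᵀS(P*)⁻¹(DᵀΔD)S(P)⁻¹(DᵀΔD)S(P)⁻¹N(P) and N(Δ) = B1ᵀΔ + DᵀΔC. -/
open Matrix Filter
open scoped Kronecker

noncomputable section

/-- Frobenius norm of a real matrix. -/
def frobNorm {I J : Type*} [Fintype I] [Fintype J] (M : Matrix I J ℝ) : ℝ :=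
  Real.sqrt (∑ i, ∑ j, (M i j) ^ 2)

/-- Spectral norm (induced 2-norm) of a real matrix. -/
def specNorm {I J : Type*} [Fintype I] [Fintype J] [DecidableEq J] (M : Matrix I J ℝ) : ℝ :=
  @norm _ (Matrix.instL2OpNormedAddCommGroup (m := I) (n := J) (𝕜 := ℝ)).toNorm M

/-- The generalized Lyapunov operator `𝓛_{X,Z}(Y) = XᵀY + YX + ZᵀYZ`. -/
def lyapOp {n : ℕ} (X Z Y : Matrix (Fin n) (Fin n) ℝ) : Matrix (Fin n) (Fin n) ℝ :=
  Xᵀ * Y + Y * X + Zᵀ * Y * Z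

/-- A gain pair `(Lu, Lv)` is stabilizing (mean-square stability of the closed loop). -/
def Stabilizing {n m1 m2 : ℕ} (A C : Matrix (Fin n) (Fin n) ℝ)
    (B1 D : Matrix (Fin n) (Fin m1) ℝ) (B2 : Matrix (Fin n) (Fin m2) ℝ)
    (Lu : Matrix (Fin m1) (Fin n) ℝ) (Lv : Matrix (Fin m2) (Fin n) ℝ) : Prop :=
  HurwitzKron (A + B1 * Lu + B2 * Lv) (C + D * Lu)

/-- `N(P) = B1ᵀP + DᵀPC`. -/
def Nmat {n m1 : ℕ} (C : Matrix (Fin n) (Fin n) ℝ) (B1 D : Matrix (Fin n) (Fin m1) ℝ)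
    (P : Matrix (Fin n) (Fin n) ℝ) : Matrix (Fin m1) (Fin n) ℝ :=
  B1ᵀ * P + Dᵀ * P * C

/-- `S(P) = R + DᵀPD`. -/
def Smat {n m1 : ℕ} (R : Matrix (Fin m1) (Fin m1) ℝ) (D : Matrix (Fin n) (Fin m1) ℝ)
    (P : Matrix (Fin n) (Fin n) ℝ) : Matrix (Fin m1) (Fin m1) ℝ :=
  R + Dᵀ * P * D

/-- `K(P) = −S(P)⁻¹ N(P)`. -/
def Kgain {n m1 : ℕ} (C : Matrix (Fin n) (Fin n) ℝ) (B1 D : Matrix (Fin n) (Fin m1) ℝ)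
    (R : Matrix (Fin m1) (Fin m1) ℝ) (P : Matrix (Fin n) (Fin n) ℝ) :
    Matrix (Fin m1) (Fin n) ℝ :=
  -((Smat R D P)⁻¹ * Nmat C B1 D P)

/-- The symmetric block matrix `M(P)` of the paper. -/
def Mblk {n m1 m2 : ℕ} (A C Q : Matrix (Fin n) (Fin n) ℝ)
    (B1 D : Matrix (Fin n) (Fin m1) ℝ) (B2 : Matrix (Fin n) (Fin m2) ℝ)
    (R : Matrix (Fin m1) (Fin m1) ℝ) (γ : ℝ) (P : Matrix (Fin n) (Fin n) ℝ) :
    Matrix (Fin n ⊕ Fin m1 ⊕ Fin m2) (Fin n ⊕ Fin m1 ⊕ Fin m2) ℝ :=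
  Matrix.of fun i j =>
    match i, j with
    | Sum.inl i, Sum.inl j => (Q + Aᵀ * P + P * A + Cᵀ * P * C) i j
    | Sum.inl i, Sum.inr (Sum.inl j) => (Nmat C B1 D P)ᵀ i j
    | Sum.inl i, Sum.inr (Sum.inr j) => (B2ᵀ * P)ᵀ i j
    | Sum.inr (Sum.inl i), Sum.inl j => (Nmat C B1 D P) i j
    | Sum.inr (Sum.inl i), Sum.inr (Sum.inl j) => (Smat R D P) i j
    | Sum.inr (Sum.inl _), Sum.inr (Sum.inr _) => 0
    | Sum.inr (Sum.inr i), Sum.inl j => (B2ᵀ * P) i j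
    | Sum.inr (Sum.inr _), Sum.inr (Sum.inl _) => 0
    | Sum.inr (Sum.inr i), Sum.inr (Sum.inr j) =>
        ((-γ ^ 2) • (1 : Matrix (Fin m2) (Fin m2) ℝ)) i j

/-- The `uu` block of an `(n+m1+m2)×(n+m1+m2)` matrix. -/
def blkUU {n m1 m2 : ℕ}
    (M : Matrix (Fin n ⊕ Fin m1 ⊕ Fin m2) (Fin n ⊕ Fin m1 ⊕ Fin m2) ℝ) :
    Matrix (Fin m1) (Fin m1) ℝ :=
  Matrix.of fun i j => M (Sum.inr (Sum.inl i)) (Sum.inr (Sum.inl j))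

/-- The `ux` block of an `(n+m1+m2)×(n+m1+m2)` matrix. -/
def blkUX {n m1 m2 : ℕ}
    (M : Matrix (Fin n ⊕ Fin m1 ⊕ Fin m2) (Fin n ⊕ Fin m1 ⊕ Fin m2) ℝ) :
    Matrix (Fin m1) (Fin n) ℝ :=
  Matrix.of fun i j => M (Sum.inr (Sum.inl i)) (Sum.inl j)

/-- The inner GARE at the gain `Lv`:
`(A+B2 Lv)ᵀP + P(A+B2 Lv) + CᵀPC + Q − γ² LvᵀLv − N(P)ᵀS(P)⁻¹N(P) = 0`. -/
def InnerGARE {n m1 m2 : ℕ} (A C Q : Matrix (Fin n) (Fin n) ℝ)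
    (B1 D : Matrix (Fin n) (Fin m1) ℝ) (B2 : Matrix (Fin n) (Fin m2) ℝ)
    (R : Matrix (Fin m1) (Fin m1) ℝ) (γ : ℝ) (Lv : Matrix (Fin m2) (Fin n) ℝ)
    (P : Matrix (Fin n) (Fin n) ℝ) : Prop :=
  (A + B2 * Lv)ᵀ * P + P * (A + B2 * Lv) + Cᵀ * P * C + Q - (γ ^ 2) • (Lvᵀ * Lv)
    - (Nmat C B1 D P)ᵀ * (Smat R D P)⁻¹ * Nmat C B1 D P = 0

/-- The full game algebraic Riccati equation. -/
def FullGARE {n m1 m2 : ℕ} (A C Q : Matrix (Fin n) (Fin n) ℝ)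
    (B1 D : Matrix (Fin n) (Fin m1) ℝ) (B2 : Matrix (Fin n) (Fin m2) ℝ)
    (R : Matrix (Fin m1) (Fin m1) ℝ) (γ : ℝ) (P : Matrix (Fin n) (Fin n) ℝ) : Prop :=
  Aᵀ * P + P * A + Cᵀ * P * C + (γ ^ 2)⁻¹ • (P * B2 * B2ᵀ * P)
    - (Nmat C B1 D P)ᵀ * (Smat R D P)⁻¹ * Nmat C B1 D P + Q = 0

/-- An outer iterate at `Lv`: a symmetric solution of the inner GARE at `Lv` with `S(P)`
invertible and `(K(P), Lv)` stabilizing. -/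
def OuterIterate {n m1 m2 : ℕ} (A C Q : Matrix (Fin n) (Fin n) ℝ)
    (B1 D : Matrix (Fin n) (Fin m1) ℝ) (B2 : Matrix (Fin n) (Fin m2) ℝ)
    (R : Matrix (Fin m1) (Fin m1) ℝ) (γ : ℝ) (Lv : Matrix (Fin m2) (Fin n) ℝ)
    (P : Matrix (Fin n) (Fin n) ℝ) : Prop :=
  P.IsSymm ∧ IsUnit (Smat R D P).det ∧ InnerGARE A C Q B1 D B2 R γ Lv P ∧
    Stabilizing A C B1 D B2 (Kgain C B1 D R P) Lv

/-- `P_v*` is a stabilizing solution of the full GARE. -/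
def StabilizingSolution {n m1 m2 : ℕ} (A C Q : Matrix (Fin n) (Fin n) ℝ)
    (B1 D : Matrix (Fin n) (Fin m1) ℝ) (B2 : Matrix (Fin n) (Fin m2) ℝ)
    (R : Matrix (Fin m1) (Fin m1) ℝ) (γ : ℝ) (P : Matrix (Fin n) (Fin n) ℝ) : Prop :=
  P.IsSymm ∧ IsUnit (Smat R D P).det ∧ FullGARE A C Q B1 D B2 R γ P ∧
    Stabilizing A C B1 D B2 (Kgain C B1 D R P) ((γ ^ 2)⁻¹ • (B2ᵀ * P))

/-!
Put `K = K(P)`, `K* = K(P*)`. Completing the square in the Riccati equation for `P*` gives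
`𝓛_{A(P),C(P)}(P*) = -Q_k - KᵀRK + (K - K*)ᵀ S(P*) (K - K*)`, while the equation for `P'` says
`𝓛_{A(P),C(P)}(P') = -Q_k - KᵀRK`. So `𝓛_{A(P),C(P)}(P' - P*) = -(K - K*)ᵀ S(P*) (K - K*)`, and
`𝒴(Δ)` is this quadratic form rewritten through `N(Δ) = N(P) - N(P*)`, `DᵀΔD = S(P) - S(P*)` and
`S(P*)⁻¹ (S(P) - S(P*)) S(P)⁻¹ = S(P*)⁻¹ - S(P)⁻¹`.
-/

section QuadraticForms

variable {m n α : Type*} [Fintype m] [DecidableEq m] [CommRing α]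

theorem transpose_nonsing_inv_of_isSymm {S : Matrix m m α} (hS : S.IsSymm) : (S⁻¹)ᵀ = S⁻¹ := by
  rw [transpose_nonsing_inv, hS.eq]

theorem inv_mul_add_transpose_mul_mul_add {S : Matrix m m α} (hS : S.IsSymm) (hSdet : IsUnit S.det)
    (N K : Matrix m n α) :
    (K + S⁻¹ * N)ᵀ * S * (K + S⁻¹ * N) = Nᵀ * S⁻¹ * N + Kᵀ * N + Nᵀ * K + Kᵀ * S * K := by
  simp only [transpose_add, transpose_mul, transpose_nonsing_inv_of_isSymm hS, Matrix.add_mul,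
    Matrix.mul_add, Matrix.mul_assoc, mul_nonsing_inv_cancel_left _ _ hSdet,
    nonsing_inv_mul_cancel_left _ _ hSdet]
  abel

theorem inv_mul_sub_inv_mul_transpose_mul_mul_sub {S S₀ : Matrix m m α} (hS : S.IsSymm)
    (hS₀ : S₀.IsSymm) (hSdet : IsUnit S.det) (hS₀det : IsUnit S₀.det) (N N₀ : Matrix m n α) :
    (S₀⁻¹ * N₀ - S⁻¹ * N)ᵀ * S₀ * (S₀⁻¹ * N₀ - S⁻¹ * N) =
      (N - N₀)ᵀ * S⁻¹ * (N - N₀) + N₀ᵀ * S₀⁻¹ * (S - S₀) * S⁻¹ * N₀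
        - Nᵀ * S₀⁻¹ * (S - S₀) * S⁻¹ * N
        + Nᵀ * S₀⁻¹ * (S - S₀) * S⁻¹ * (S - S₀) * S⁻¹ * N := by
  simp only [transpose_sub, transpose_mul, transpose_nonsing_inv_of_isSymm hS,
    transpose_nonsing_inv_of_isSymm hS₀, Matrix.sub_mul, Matrix.mul_sub, Matrix.mul_assoc,
    mul_nonsing_inv_cancel_left _ _ hSdet, nonsing_inv_mul_cancel_left _ _ hSdet,
    mul_nonsing_inv_cancel_left _ _ hS₀det, nonsing_inv_mul_cancel_left _ _ hS₀det]
  abel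

end QuadraticForms

section Riccati

variable {n m1 m2 : ℕ}

theorem lyapOp_sub (X Z Y Y' : Matrix (Fin n) (Fin n) ℝ) :
    lyapOp X Z (Y - Y') = lyapOp X Z Y - lyapOp X Z Y' := by
  simp only [lyapOp, Matrix.mul_sub, Matrix.sub_mul]
  abel

theorem lyapOp_add_mul_gain {Y : Matrix (Fin n) (Fin n) ℝ} (hY : Y.IsSymm)
    (X Z : Matrix (Fin n) (Fin n) ℝ) (B D : Matrix (Fin n) (Fin m1) ℝ)
    (K : Matrix (Fin m1) (Fin n) ℝ) :
    lyapOp (X + B * K) (Z + D * K) Y =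
      lyapOp X Z Y + Kᵀ * Nmat Z B D Y + (Nmat Z B D Y)ᵀ * K + Kᵀ * (Dᵀ * Y * D) * K := by
  simp only [lyapOp, Nmat, transpose_add, transpose_mul, transpose_transpose, hY.eq,
    Matrix.add_mul, Matrix.mul_add, Matrix.mul_assoc]
  abel

theorem Nmat_sub (C : Matrix (Fin n) (Fin n) ℝ) (B1 D : Matrix (Fin n) (Fin m1) ℝ)
    (P P₀ : Matrix (Fin n) (Fin n) ℝ) :
    Nmat C B1 D (P - P₀) = Nmat C B1 D P - Nmat C B1 D P₀ := by
  simp only [Nmat, Matrix.mul_sub, Matrix.sub_mul]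
  abel

theorem Smat_sub (R : Matrix (Fin m1) (Fin m1) ℝ) (D : Matrix (Fin n) (Fin m1) ℝ)
    (P P₀ : Matrix (Fin n) (Fin n) ℝ) :
    Smat R D P - Smat R D P₀ = Dᵀ * (P - P₀) * D := by
  simp only [Smat, Matrix.mul_sub, Matrix.sub_mul]
  abel

theorem Smat_isSymm {R : Matrix (Fin m1) (Fin m1) ℝ} (hR : R.IsSymm)
    (D : Matrix (Fin n) (Fin m1) ℝ) {P : Matrix (Fin n) (Fin n) ℝ} (hP : P.IsSymm) :
    (Smat R D P).IsSymm := by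
  simp only [IsSymm, Smat, transpose_add, transpose_mul, transpose_transpose, hR.eq, hP.eq,
    Matrix.mul_assoc]

theorem Kgain_transpose_mul_mul_Kgain {C : Matrix (Fin n) (Fin n) ℝ}
    {B1 D : Matrix (Fin n) (Fin m1) ℝ} {R : Matrix (Fin m1) (Fin m1) ℝ}
    {P : Matrix (Fin n) (Fin n) ℝ} (hS : (Smat R D P).IsSymm) (M : Matrix (Fin m1) (Fin m1) ℝ) :
    (Kgain C B1 D R P)ᵀ * M * Kgain C B1 D R P =
      (Nmat C B1 D P)ᵀ * (Smat R D P)⁻¹ * M * (Smat R D P)⁻¹ * Nmat C B1 D P := by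
  simp only [Kgain, transpose_neg, transpose_mul, transpose_nonsing_inv_of_isSymm hS,
    Matrix.neg_mul, Matrix.mul_neg, neg_neg, Matrix.mul_assoc]

theorem InnerGARE.lyapOp_eq {A C Q : Matrix (Fin n) (Fin n) ℝ} {B1 D : Matrix (Fin n) (Fin m1) ℝ}
    {B2 : Matrix (Fin n) (Fin m2) ℝ} {R : Matrix (Fin m1) (Fin m1) ℝ} {γ : ℝ}
    {Lv : Matrix (Fin m2) (Fin n) ℝ} {P : Matrix (Fin n) (Fin n) ℝ}
    (h : InnerGARE A C Q B1 D B2 R γ Lv P) :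
    lyapOp (A + B2 * Lv) C P =
      -(Q - γ ^ 2 • (Lvᵀ * Lv)) + (Nmat C B1 D P)ᵀ * (Smat R D P)⁻¹ * Nmat C B1 D P := by
  rw [← sub_eq_zero, ← h, lyapOp]
  abel

theorem InnerGARE.lyapOp_closed_loop {A C Q : Matrix (Fin n) (Fin n) ℝ}
    {B1 D : Matrix (Fin n) (Fin m1) ℝ} {B2 : Matrix (Fin n) (Fin m2) ℝ}
    {R : Matrix (Fin m1) (Fin m1) ℝ} {γ : ℝ} {Lv : Matrix (Fin m2) (Fin n) ℝ}
    {P : Matrix (Fin n) (Fin n) ℝ} (h : InnerGARE A C Q B1 D B2 R γ Lv P) (hR : R.IsSymm)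
    (hP : P.IsSymm) (hS : IsUnit (Smat R D P).det) (K : Matrix (Fin m1) (Fin n) ℝ) :
    lyapOp (A + B2 * Lv + B1 * K) (C + D * K) P =
      -(Q - γ ^ 2 • (Lvᵀ * Lv)) - Kᵀ * R * K
        + (K - Kgain C B1 D R P)ᵀ * Smat R D P * (K - Kgain C B1 D R P) := by
  rw [lyapOp_add_mul_gain hP, h.lyapOp_eq, Kgain, sub_neg_eq_add,
    inv_mul_add_transpose_mul_mul_add (Smat_isSymm hR D hP) hS, Smat]
  simp only [Matrix.mul_add, Matrix.add_mul, Matrix.mul_assoc]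
  abel

end Riccati

theorem inner_loop_error_identity_general (n m1 m2 : ℕ)
    (A C Q : Matrix (Fin n) (Fin n) ℝ) (B1 D : Matrix (Fin n) (Fin m1) ℝ)
    (B2 : Matrix (Fin n) (Fin m2) ℝ) (R : Matrix (Fin m1) (Fin m1) ℝ) (γ : ℝ)
    (hR : R.PosDef)
    (Lv : Matrix (Fin m2) (Fin n) ℝ)
    (Pstar P P' : Matrix (Fin n) (Fin n) ℝ)
    (hPstar : Pstar.IsSymm) (hSstar : IsUnit (Smat R D Pstar).det)
    (hP : P.IsSymm) (hS : IsUnit (Smat R D P).det)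
    (hGARE : InnerGARE A C Q B1 D B2 R γ Lv Pstar)
    (heq : lyapOp (A + B2 * Lv + B1 * Kgain C B1 D R P) (C + D * Kgain C B1 D R P) P' =
      -(Q - (γ ^ 2) • (Lvᵀ * Lv))
        - (Nmat C B1 D P)ᵀ * (Smat R D P)⁻¹ * R * (Smat R D P)⁻¹ * Nmat C B1 D P) :
    lyapOp (A + B2 * Lv + B1 * Kgain C B1 D R P) (C + D * Kgain C B1 D R P) (P' - Pstar) =
      -((Nmat C B1 D (P - Pstar))ᵀ * (Smat R D P)⁻¹ * Nmat C B1 D (P - Pstar)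
        + (Nmat C B1 D Pstar)ᵀ * (Smat R D Pstar)⁻¹ * (Dᵀ * (P - Pstar) * D)
            * (Smat R D P)⁻¹ * Nmat C B1 D Pstar
        - (Nmat C B1 D P)ᵀ * (Smat R D Pstar)⁻¹ * (Dᵀ * (P - Pstar) * D)
            * (Smat R D P)⁻¹ * Nmat C B1 D P
        + (Nmat C B1 D P)ᵀ * (Smat R D Pstar)⁻¹ * (Dᵀ * (P - Pstar) * D)
            * (Smat R D P)⁻¹ * (Dᵀ * (P - Pstar) * D)
            * (Smat R D P)⁻¹ * Nmat C B1 D P) := by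
  have hRsymm : R.IsSymm := isHermitian_iff_isSymm.mp hR.isHermitian
  have hSsymm := Smat_isSymm hRsymm D hP
  have hSstarsymm := Smat_isSymm hRsymm D hPstar
  rw [lyapOp_sub, heq, ← Kgain_transpose_mul_mul_Kgain hSsymm,
    hGARE.lyapOp_closed_loop hRsymm hPstar hSstar, sub_add_cancel_left, Nmat_sub, ← Smat_sub,
    ← inv_mul_sub_inv_mul_transpose_mul_mul_sub hSsymm hSstarsymm hS hSstar, Kgain, Kgain,
    neg_sub_neg]

/-- Exact-error identity for one policy-evaluation step of the inner loop. -/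
theorem inner_loop_error_identity (n m1 m2 : ℕ) (hn : 0 < n) (hm1 : 0 < m1) (hm2 : 0 < m2)
    (A C Q : Matrix (Fin n) (Fin n) ℝ) (B1 D : Matrix (Fin n) (Fin m1) ℝ)
    (B2 : Matrix (Fin n) (Fin m2) ℝ) (R : Matrix (Fin m1) (Fin m1) ℝ) (γ : ℝ)
    (hQ : Q.PosSemidef) (hR : R.PosDef) (hγ : 0 < γ)
    (Lv : Matrix (Fin m2) (Fin n) ℝ)
    (Pstar P P' : Matrix (Fin n) (Fin n) ℝ)
    (hPstar : Pstar.IsSymm) (hSstar : IsUnit (Smat R D Pstar).det)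
    (hP : P.IsSymm) (hS : IsUnit (Smat R D P).det)
    (hGARE : InnerGARE A C Q B1 D B2 R γ Lv Pstar)
    (hP' : P'.IsSymm)
    (heq : lyapOp (A + B2 * Lv + B1 * Kgain C B1 D R P) (C + D * Kgain C B1 D R P) P' =
      -(Q - (γ ^ 2) • (Lvᵀ * Lv))
        - (Nmat C B1 D P)ᵀ * (Smat R D P)⁻¹ * R * (Smat R D P)⁻¹ * Nmat C B1 D P) :
    lyapOp (A + B2 * Lv + B1 * Kgain C B1 D R P) (C + D * Kgain C B1 D R P) (P' - Pstar) =
      -((Nmat C B1 D (P - Pstar))ᵀ * (Smat R D P)⁻¹ * Nmat C B1 D (P - Pstar)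
        + (Nmat C B1 D Pstar)ᵀ * (Smat R D Pstar)⁻¹ * (Dᵀ * (P - Pstar) * D)
            * (Smat R D P)⁻¹ * Nmat C B1 D Pstar
        - (Nmat C B1 D P)ᵀ * (Smat R D Pstar)⁻¹ * (Dᵀ * (P - Pstar) * D)
            * (Smat R D P)⁻¹ * Nmat C B1 D P
        + (Nmat C B1 D P)ᵀ * (Smat R D Pstar)⁻¹ * (Dᵀ * (P - Pstar) * D)
            * (Smat R D P)⁻¹ * (Dᵀ * (P - Pstar) * D)
            * (Smat R D P)⁻¹ * Nmat C B1 D P) :=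
  inner_loop_error_identity_general n m1 m2 A C Q B1 D B2 R γ hR Lv Pstar P P' hPstar hSstar hP hS
    hGARE heq

end
end

section
/- Let A ∈ ℝ^{n×n} with A ≠ 0, let Λ ∈ ℝ^{n×n} be symmetric positive semidefinite, and set a = log(5/4)/‖A‖₂. Then for every x ∈ ℝⁿ with xᵀΛx = ‖Λ‖₂·‖x‖², one has ∫₀^a xᵀ exp(Aᵀs) Λ exp(As) x ds ≥ (1/2)·a·‖Λ‖₂·‖x‖². -/
open Matrix

noncomputable section

/-! For `0 ≤ s ≤ a` one has `‖exp (s A) - 1‖₂ ≤ exp (s ‖A‖₂) - 1 ≤ 1/4`, so `exp (s A) x = x + y` with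
`‖y‖ ≤ ‖x‖ / 4`. Expanding the integrand `(x + y)ᵀ Λ (x + y)`, the term `yᵀ Λ y` is nonnegative and each
cross term is at least `-‖Λ‖₂ ‖x‖ ‖y‖`, so the integrand is at least
`xᵀ Λ x - 2 ‖Λ‖₂ ‖x‖ ‖y‖ ≥ (1 - 1/2) ‖Λ‖₂ ‖x‖²` on all of `[0, a]`. -/

open NormedSpace WithLp
open scoped Nat Matrix.Norms.L2Operator

lemma specNorm_eq_norm {I J : Type*} [Fintype I] [Fintype J] [DecidableEq J] (M : Matrix I J ℝ) :
    specNorm M = ‖M‖ :=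
  rfl

section ExpBound

variable {𝔸 : Type*} [NormedRing 𝔸] [NormedAlgebra ℝ 𝔸] [CompleteSpace 𝔸]

lemma NormedSpace.exp_sub_one_eq_tsum (x : 𝔸) :
    exp x - 1 = ∑' k : ℕ, ((k + 1)! : ℝ)⁻¹ • x ^ (k + 1) := by
  rw [congrFun (exp_eq_tsum ℝ) x, (expSeries_summable' x).tsum_eq_zero_add]
  simp

lemma NormedSpace.norm_exp_sub_one_le (x : 𝔸) : ‖exp x - 1‖ ≤ Real.exp ‖x‖ - 1 := by
  have hx := (norm_expSeries_summable' (𝕂 := ℝ) x).comp_injective Nat.succ_injective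
  have hr := (expSeries_summable' (𝕂 := ℝ) ‖x‖).comp_injective Nat.succ_injective
  rw [exp_sub_one_eq_tsum, Real.exp_eq_exp_ℝ, exp_sub_one_eq_tsum]
  refine (norm_tsum_le_tsum_norm hx).trans (hx.tsum_le_tsum (fun k => ?_) hr)
  simp only [norm_smul, smul_eq_mul, Real.norm_eq_abs, abs_inv, Nat.abs_cast]
  gcongr
  exact norm_pow_le' x k.succ_pos

lemma NormedSpace.norm_exp_sub_one_le_quarter {x : 𝔸} (hx : ‖x‖ ≤ Real.log (5 / 4)) :
    ‖exp x - 1‖ ≤ 1 / 4 := by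
  have : Real.exp ‖x‖ ≤ 5 / 4 := by
    simpa [Real.exp_log] using Real.exp_le_exp.mpr hx
  linarith [norm_exp_sub_one_le x]

lemma continuous_exp_smul_const (a : 𝔸) : Continuous fun s : ℝ => exp (s • a) :=
  continuous_iff_continuousAt.2 fun s => (hasDerivAt_exp_smul_const a s).continuousAt

end ExpBound

section QuadraticForm

variable {ι : Type*} [Fintype ι] [DecidableEq ι]

omit [DecidableEq ι] in
lemma dotProduct_transpose_mul_mul_mulVec (M Λ : Matrix ι ι ℝ) (x : ι → ℝ) :
    x ⬝ᵥ ((Mᵀ * Λ * M) *ᵥ x) = (M *ᵥ x) ⬝ᵥ (Λ *ᵥ (M *ᵥ x)) := by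
  rw [← mulVec_mulVec, ← mulVec_mulVec, dotProduct_mulVec x, vecMul_transpose]

lemma abs_dotProduct_mulVec_le (M : Matrix ι ι ℝ) (v w : ι → ℝ) :
    |v ⬝ᵥ (M *ᵥ w)| ≤ ‖M‖ * ‖toLp 2 v‖ * ‖toLp 2 w‖ := by
  have hinner : v ⬝ᵥ (M *ᵥ w) = inner ℝ (toLp 2 (M *ᵥ w)) (toLp 2 v) := by
    simp [EuclideanSpace.inner_toLp_toLp]
  calc |v ⬝ᵥ (M *ᵥ w)| ≤ ‖toLp 2 (M *ᵥ w)‖ * ‖toLp 2 v‖ := hinner ▸ abs_real_inner_le_norm _ _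
    _ ≤ ‖M‖ * ‖toLp 2 w‖ * ‖toLp 2 v‖ := by gcongr; exact l2_opNorm_mulVec M (toLp 2 w)
    _ = ‖M‖ * ‖toLp 2 v‖ * ‖toLp 2 w‖ := by ring

lemma Matrix.PosSemidef.dotProduct_mulVec_sub_le {Λ : Matrix ι ι ℝ} (hΛ : Λ.PosSemidef)
    (v w : ι → ℝ) :
    v ⬝ᵥ (Λ *ᵥ v) - 2 * ‖Λ‖ * ‖toLp 2 v‖ * ‖toLp 2 w‖ ≤ (v + w) ⬝ᵥ (Λ *ᵥ (v + w)) := by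
  have hw : 0 ≤ w ⬝ᵥ (Λ *ᵥ w) := by simpa using hΛ.dotProduct_mulVec_nonneg w
  have hvw := abs_le.mp (abs_dotProduct_mulVec_le Λ v w)
  have hwv := abs_le.mp (abs_dotProduct_mulVec_le Λ w v)
  simp only [mulVec_add, dotProduct_add, add_dotProduct]
  linarith [hvw.1, hwv.1]

lemma Matrix.PosSemidef.mul_le_dotProduct_mulVec_mulVec {Λ : Matrix ι ι ℝ}
    (hΛ : Λ.PosSemidef) {x : ι → ℝ} (hx : x ⬝ᵥ (Λ *ᵥ x) = ‖Λ‖ * ‖toLp 2 x‖ ^ 2)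
    {M : Matrix ι ι ℝ} {ε : ℝ} (hM : ‖M - 1‖ ≤ ε) :
    (1 - 2 * ε) * ‖Λ‖ * ‖toLp 2 x‖ ^ 2 ≤ (M *ᵥ x) ⬝ᵥ (Λ *ᵥ (M *ᵥ x)) := by
  have hMx : M *ᵥ x = x + (M - 1) *ᵥ x := by
    rw [sub_mulVec, one_mulVec, add_sub_cancel]
  have hNx : ‖toLp 2 ((M - 1) *ᵥ x)‖ ≤ ε * ‖toLp 2 x‖ :=
    (l2_opNorm_mulVec (M - 1) (toLp 2 x)).trans (by gcongr)
  have hexpand := hΛ.dotProduct_mulVec_sub_le x ((M - 1) *ᵥ x)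
  rw [hx, ← hMx] at hexpand
  have hcross := mul_le_mul_of_nonneg_left hNx (by positivity : 0 ≤ 2 * ‖Λ‖ * ‖toLp 2 x‖)
  linarith

lemma dotProduct_exp_transpose_mul_mul_exp_mulVec (A Λ : Matrix ι ι ℝ) (s : ℝ) (x : ι → ℝ) :
    x ⬝ᵥ ((exp (s • Aᵀ) * Λ * exp (s • A)) *ᵥ x) =
      (exp (s • A) *ᵥ x) ⬝ᵥ (Λ *ᵥ (exp (s • A) *ᵥ x)) := by
  rw [← transpose_smul, exp_transpose, dotProduct_transpose_mul_mul_mulVec]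

lemma Matrix.PosSemidef.half_mul_le_dotProduct_exp_mulVec {Λ : Matrix ι ι ℝ}
    (hΛ : Λ.PosSemidef) {x : ι → ℝ} (hx : x ⬝ᵥ (Λ *ᵥ x) = ‖Λ‖ * ‖toLp 2 x‖ ^ 2)
    (A : Matrix ι ι ℝ) {s : ℝ} (hs₀ : 0 ≤ s) (hs : s * ‖A‖ ≤ Real.log (5 / 4)) :
    1 / 2 * ‖Λ‖ * ‖toLp 2 x‖ ^ 2 ≤ x ⬝ᵥ ((exp (s • Aᵀ) * Λ * exp (s • A)) *ᵥ x) := by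
  have hexp : ‖exp (s • A) - 1‖ ≤ 1 / 4 :=
    norm_exp_sub_one_le_quarter (by rwa [norm_smul, Real.norm_of_nonneg hs₀])
  rw [dotProduct_exp_transpose_mul_mul_exp_mulVec]
  convert hΛ.mul_le_dotProduct_mulVec_mulVec hx hexp using 2
  norm_num

end QuadraticForm

theorem integral_exp_quadratic_lower_bound_general (n : ℕ)
    (A : Matrix (Fin n) (Fin n) ℝ)
    (Λ : Matrix (Fin n) (Fin n) ℝ) (hΛ : Λ.PosSemidef)
    (x : Fin n → ℝ)
    (hx : x ⬝ᵥ (Λ *ᵥ x) = specNorm Λ * (∑ i, x i ^ 2)) :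
    (1 / 2) * (Real.log (5 / 4) / specNorm A) * specNorm Λ * (∑ i, x i ^ 2) ≤
      ∫ s in (0 : ℝ)..(Real.log (5 / 4) / specNorm A),
        x ⬝ᵥ ((NormedSpace.exp (s • Aᵀ) * Λ * NormedSpace.exp (s • A)) *ᵥ x) := by
  simp only [specNorm_eq_norm] at hx ⊢
  rw [← EuclideanSpace.real_norm_sq_eq (toLp 2 x)] at hx ⊢
  have ha : 0 ≤ Real.log (5 / 4) / ‖A‖ := by positivity
  have hcont : Continuous fun s : ℝ => x ⬝ᵥ ((exp (s • Aᵀ) * Λ * exp (s • A)) *ᵥ x) := by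
    have := continuous_exp_smul_const A
    have := continuous_exp_smul_const Aᵀ
    fun_prop
  calc _ = ∫ _ in (0 : ℝ)..(Real.log (5 / 4) / ‖A‖), 1 / 2 * ‖Λ‖ * ‖toLp 2 x‖ ^ 2 := by
        rw [intervalIntegral.integral_const, smul_eq_mul]; ring
    _ ≤ _ := intervalIntegral.integral_mono_on ha intervalIntegrable_const
        (hcont.intervalIntegrable _ _) fun s hs ↦ hΛ.half_mul_le_dotProduct_exp_mulVec hx A hs.1
          (mul_le_of_le_div₀ (Real.log_nonneg (by norm_num)) (norm_nonneg A) hs.2)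

/-- If `x` attains the spectral norm of the positive semidefinite matrix `Λ`, i.e.
`xᵀΛx = ‖Λ‖₂‖x‖²`, then with `a = log(5/4)/‖A‖₂` one has
`∫₀^a xᵀ exp(Aᵀs) Λ exp(As) x ds ≥ (1/2) a ‖Λ‖₂ ‖x‖²`. -/
theorem integral_exp_quadratic_lower_bound (n : ℕ) (hn : 0 < n)
    (A : Matrix (Fin n) (Fin n) ℝ) (hA : A ≠ 0)
    (Λ : Matrix (Fin n) (Fin n) ℝ) (hΛ : Λ.PosSemidef)
    (x : Fin n → ℝ)
    (hx : x ⬝ᵥ (Λ *ᵥ x) = specNorm Λ * (∑ i, x i ^ 2)) :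
    (1 / 2) * (Real.log (5 / 4) / specNorm A) * specNorm Λ * (∑ i, x i ^ 2) ≤
      ∫ s in (0 : ℝ)..(Real.log (5 / 4) / specNorm A),
        x ⬝ᵥ ((NormedSpace.exp (s • Aᵀ) * Λ * NormedSpace.exp (s • A)) *ᵥ x) :=
  integral_exp_quadratic_lower_bound_general n A Λ hΛ x hx
end
end
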